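/- There is no Green's function of the punctured unit disk $\mathbb{D} \setminus \{0\}$ with pole at $w = 1/2$; that is, there exists no function $g : \mathbb{C} \to \mathbb{R}$ such that $g$ is continuous on $\mathbb{C} \setminus \{1/2\}$, $g = 0$ on $\mathbb{C} \setminus (\mathbb{D} \setminus \{0\})$, $g$ is harmonic on $(\mathbb{D} \setminus \{0\}) \setminus \{1/2\}$, and $z \mapsto g(z) + \log|z - 1/2|$ is bounded on some punctured neighborhood of $1/2$. (In other words, the punctured disk is not a regular domain.) -/

import Mathlib

open Metric

/-- A function is harmonic on a set `s ⊆ ℂ` if it is `C²` there and its Laplacian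
(the sum of the second directional derivatives in the directions `1` and `I`) vanishes. -/
def HarmonicOnSet (f : ℂ → ℝ) (s : Set ℂ) : Prop :=
  ContDiffOn ℝ 2 f s ∧
  ∀ z ∈ s,
    fderiv ℝ (fun y => fderiv ℝ f y 1) z 1 +
      fderiv ℝ (fun y => fderiv ℝ f y Complex.I) z Complex.I = 0

/-- `g : ℂ → ℝ` is a Green's function of `Ω` with pole at `w`, extended by zero. -/
def IsGreensFunction (Ω : Set ℂ) (w : ℂ) (g : ℂ → ℝ) : Prop :=
  ContinuousOn g {w}ᶜ ∧
  (∀ z, z ∉ Ω → g z = 0) ∧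
  HarmonicOnSet g (Ω \ {w}) ∧
  ∃ C : ℝ, ∃ r > (0 : ℝ), ∀ z ∈ Metric.ball w r \ {w},
    |g z + Real.log ‖z - w‖| ≤ C

/-!
Suppose `g` were such a Green's function and let `G` be the Green's function of `𝔻` with pole
`1/2`. For `b > 0`, compare `g` with `G / 2 + b log |z|`: both vanish on the unit circle; near the
pole `g ≥ -log |z - 1/2| - C` beats `G / 2 ≈ -log |z - 1/2| / 2`; near `0` the continuity of `g`
at `g 0 = 0` keeps `g > -1`, while `b log |z| → -∞`. The maximum principle on the disk with two
small holes gives `G / 2 + b log |z| ≤ g`, and letting `b → 0` yields `G / 2 ≤ g` on the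
punctured disk. By continuity at `0` this gives `log 2 / 2 = G 0 / 2 ≤ g 0 = 0`.
-/

open Filter Topology InnerProductSpace

theorem HarmonicOnSet.harmonicOnNhd {f : ℂ → ℝ} {s : Set ℂ} (hs : IsOpen s)
    (hf : HarmonicOnSet f s) : HarmonicOnNhd f s := by
  intro x hx
  refine ⟨hf.1.contDiffAt (hs.mem_nhds hx), ?_⟩
  filter_upwards [hs.mem_nhds hx] with y hy
  have hd : DifferentiableAt ℝ (fderiv ℝ f) y :=
    ((hf.1.contDiffAt (hs.mem_nhds hy)).fderiv_right (m := 1) (by norm_num)).differentiableAt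
      (by norm_num)
  have h := hf.2 y hy
  rw [fderiv_clm_apply hd (differentiableAt_const _),
    fderiv_clm_apply hd (differentiableAt_const _)] at h
  simpa [laplacian_eq_iteratedFDeriv_complexPlane, iteratedFDeriv_two_apply] using h

theorem InnerProductSpace.HarmonicAt.eventually_eq_of_isLocalMax {f : ℂ → ℝ} {x : ℂ}
    (hf : HarmonicAt f x) (hmax : IsLocalMax f x) : ∀ᶠ y in 𝓝 x, f y = f x := by
  -- near `x`, `f = re F` with `F` holomorphic, and `‖exp F‖ = exp f` has a local maximum at `x`
  obtain ⟨R, hR, hharm⟩ := Metric.eventually_nhds_iff_ball.1 hf.eventually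
  obtain ⟨F, hF, hre⟩ := HarmonicOnNhd.exists_analyticOnNhd_ball_re_eq (z := x) hharm
  have hball : ball x R ∈ 𝓝 x := ball_mem_nhds x hR
  have hnorm : ∀ y ∈ ball x R, ‖Complex.exp (F y)‖ = Real.exp (f y) := fun y hy => by
    rw [Complex.norm_exp, ← hre hy]
  have hconst := Complex.eventually_eq_of_isLocalMax_norm (f := Complex.exp ∘ F) (c := x)
    (by
      filter_upwards [hball] with y hy
      exact (hF y hy).differentiableAt.cexp)
    (by
      filter_upwards [hball, hmax] with y hy hfy
      simp only [Function.comp_apply, hnorm y hy, hnorm x (mem_ball_self hR)]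
      exact Real.exp_le_exp.2 hfy)
  filter_upwards [hball, hconst] with y hy hFy
  have := congrArg norm hFy
  simp only [Function.comp_apply, hnorm y hy, hnorm x (mem_ball_self hR)] at this
  exact Real.exp_injective this

theorem InnerProductSpace.HarmonicOnNhd.exists_mem_frontier_isMaxOn {f : ℂ → ℝ} {U : Set ℂ}
    (hb : Bornology.IsBounded U) (hne : U.Nonempty) (hf : HarmonicOnNhd f U)
    (hc : ContinuousOn f (closure U)) : ∃ z ∈ frontier U, IsMaxOn f (closure U) z := by
  obtain ⟨w, hw, hmax⟩ := hb.isCompact_closure.exists_isMaxOn hne.closure hc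
  by_contra! hfr
  -- otherwise the set where the maximum is attained is a nonempty bounded clopen subset of `ℂ`
  set S := closure U ∩ f ⁻¹' {f w}
  have hS_closed : IsClosed S :=
    hc.preimage_isClosed_of_isClosed isClosed_closure isClosed_singleton
  have hS_open : IsOpen S := by
    refine isOpen_iff_mem_nhds.2 fun x ⟨hxU, hx⟩ => ?_
    have hmaxx : IsMaxOn f (closure U) x := fun y hy => (hmax hy).trans_eq hx.symm
    have hint : x ∈ interior U := by
      rw [closure_eq_interior_union_frontier] at hxU
      exact hxU.resolve_right fun h => hfr x h hmaxx
    have hUx : U ∈ 𝓝 x := mem_interior_iff_mem_nhds.1 hint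
    filter_upwards [hUx, (hf x (interior_subset hint)).eventually_eq_of_isLocalMax
      (hmaxx.isLocalMax (mem_of_superset hUx subset_closure))] with y hy hfy
    exact ⟨subset_closure hy, hfy.trans hx⟩
  have : S = Set.univ := (isClopen_iff.1 ⟨hS_closed, hS_open⟩).resolve_left
    (Set.nonempty_iff_ne_empty.1 ⟨w, hw, rfl⟩)
  exact NormedSpace.unbounded_univ ℝ ℂ (hb.closure.subset (this ▸ Set.inter_subset_left))

theorem InnerProductSpace.HarmonicOnNhd.le_of_forall_mem_frontier_le {f : ℂ → ℝ} {U : Set ℂ}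
    (hb : Bornology.IsBounded U) (hf : HarmonicOnNhd f U) (hc : ContinuousOn f (closure U))
    {M : ℝ} (hM : ∀ z ∈ frontier U, f z ≤ M) {z : ℂ} (hz : z ∈ closure U) : f z ≤ M := by
  obtain ⟨w, hw, hmax⟩ := hf.exists_mem_frontier_isMaxOn hb (closure_nonempty_iff.1 ⟨z, hz⟩) hc
  exact (hmax hz).trans (hM w hw)

theorem nonpos_on_disk_diff_pair_of_nonpos_near_boundary {f : ℂ → ℝ} {a : ℂ} {ε ρ : ℝ}
    (hε : 0 < ε) (hρ : 0 < ρ)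
    (hf : HarmonicOnNhd f (ball 0 1 \ {0, a})) (hc : ContinuousOn f (closedBall 0 1 \ {0, a}))
    (hle : ∀ z ∈ closedBall 0 1 \ {0, a}, ‖z‖ = 1 ∨ ‖z‖ ≤ ε ∨ ‖z - a‖ ≤ ρ → f z ≤ 0)
    {z : ℂ} (hz : z ∈ closedBall 0 1 \ {0, a}) : f z ≤ 0 := by
  set D := {z : ℂ | ‖z‖ < 1 ∧ ε < ‖z‖ ∧ ρ < ‖z - a‖}
  have hD_open : IsOpen D := by
    simp only [D, Set.ofPred_and]
    refine (isOpen_lt ?_ ?_).inter ((isOpen_lt ?_ ?_).inter (isOpen_lt ?_ ?_)) <;> fun_prop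
  have hD_closure : closure D ⊆ {z | ‖z‖ ≤ 1 ∧ ε ≤ ‖z‖ ∧ ρ ≤ ‖z - a‖} := by
    refine closure_minimal (fun z hz => ⟨hz.1.le, hz.2.1.le, hz.2.2.le⟩) ?_
    simp only [Set.ofPred_and]
    refine (isClosed_le ?_ ?_).inter ((isClosed_le ?_ ?_).inter (isClosed_le ?_ ?_)) <;> fun_prop
  have hD_sub : closure D ⊆ closedBall 0 1 \ {0, a} := by
    intro z hz
    obtain ⟨h1, hε', hρ'⟩ := hD_closure hz
    refine ⟨mem_closedBall_zero_iff.2 h1, ?_⟩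
    rintro (rfl | rfl) <;> simp at hε' hρ' <;> linarith
  have hout : ∀ w ∈ closedBall 0 1 \ {0, a}, w ∉ D → f w ≤ 0 := by
    intro w hw hwD
    simp only [D, Set.mem_ofPred_eq, not_and_or, not_lt] at hwD
    exact hle w hw (hwD.imp_left (le_antisymm (mem_closedBall_zero_iff.1 hw.1)))
  by_cases hzD : z ∈ D
  · refine (hf.mono fun w hw => ?_).le_of_forall_mem_frontier_le
      (isBounded_ball.subset fun w hw => mem_ball_zero_iff.2 hw.1) (hc.mono hD_sub)
      (fun w hw => ?_) (subset_closure hzD)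
    · exact ⟨mem_ball_zero_iff.2 hw.1, (hD_sub (subset_closure hw)).2⟩
    · rw [hD_open.frontier_eq] at hw
      exact hout w (hD_sub hw.1) hw.2
  · exact hout z hz hzD

noncomputable def diskGreen (z : ℂ) : ℝ := -Real.log ‖(z - 1 / 2) / (1 - z / 2)‖

theorem diskGreen_harmonicAt {z : ℂ} (hz : z ≠ 1 / 2) (hz' : z ≠ 2) :
    HarmonicAt diskGreen z := by
  have hden : 1 - z / 2 ≠ 0 := fun h => hz' (by linear_combination -2 * h)
  have hnum : z - 1 / 2 ≠ 0 := sub_ne_zero.2 hz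
  have han : AnalyticAt ℂ (fun z : ℂ => (z - 1 / 2) / (1 - z / 2)) z := by
    fun_prop (disch := assumption)
  exact (han.harmonicAt_log_norm (div_ne_zero hnum hden)).neg

theorem diskGreen_zero : diskGreen 0 = Real.log 2 := by
  simp [diskGreen]

theorem diskGreen_eq_zero_of_norm_eq_one {z : ℂ} (hz : ‖z‖ = 1) : diskGreen z = 0 := by
  have hz2 : z.re * z.re + z.im * z.im = 1 := by
    rw [← Complex.normSq_apply, ← Complex.sq_norm, hz, one_pow]
  have heq : ‖z - 1 / 2‖ = ‖1 - z / 2‖ := by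
    rw [← sq_eq_sq₀ (norm_nonneg _) (norm_nonneg _), Complex.sq_norm, Complex.sq_norm,
      Complex.normSq_apply, Complex.normSq_apply]
    simp only [Complex.sub_re, Complex.sub_im, Complex.div_re, Complex.div_im]
    norm_num
    linear_combination (3 / 4) * hz2
  rw [diskGreen, norm_div, heq]
  rcases eq_or_ne ‖1 - z / 2‖ 0 with h | h
  · simp [h]
  · simp [div_self h]

theorem diskGreen_le {z : ℂ} (hz : ‖z‖ ≤ 1) (hz' : z ≠ 1 / 2) :
    diskGreen z ≤ 1 - Real.log ‖z - 1 / 2‖ := by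
  have hden : ‖1 - z / 2‖ ≤ 3 / 2 := by
    calc ‖1 - z / 2‖ ≤ ‖(1 : ℂ)‖ + ‖z / 2‖ := norm_sub_le _ _
      _ ≤ 3 / 2 := by simp; linarith
  have hden' : 1 / 2 ≤ ‖1 - z / 2‖ := by
    calc (1 : ℝ) / 2 ≤ ‖(1 : ℂ)‖ - ‖z / 2‖ := by simp; linarith
      _ ≤ ‖1 - z / 2‖ := norm_sub_norm_le _ _
  have hnum : ‖z - 1 / 2‖ ≠ 0 := norm_ne_zero_iff.2 (sub_ne_zero.2 hz')
  rw [diskGreen, norm_div, Real.log_div hnum (by positivity)]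
  have := Real.log_le_sub_one_of_pos (show 0 < ‖1 - z / 2‖ by positivity)
  linarith

theorem diskGreen_le_three {z : ℂ} (hz : ‖z‖ ≤ 1 / 8) : diskGreen z ≤ 3 := by
  have hfar : 3 / 8 ≤ ‖z - 1 / 2‖ := by
    calc (3 : ℝ) / 8 ≤ ‖(1 / 2 : ℂ)‖ - ‖z‖ := by norm_num; linarith
      _ ≤ ‖z - 1 / 2‖ := by rw [norm_sub_rev]; exact norm_sub_norm_le _ _
  have hne : z ≠ 1 / 2 := by rintro rfl; norm_num at hz
  have hlog : -Real.log ‖z - 1 / 2‖ ≤ 2 := by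
    rw [← Real.log_inv]
    have := Real.log_le_sub_one_of_pos (show 0 < ‖z - 1 / 2‖⁻¹ by positivity)
    have : ‖z - 1 / 2‖⁻¹ ≤ 8 / 3 := by rw [inv_le_comm₀ (by positivity) (by norm_num)]; linarith
    linarith
  linarith [diskGreen_le (hz.trans (by norm_num)) hne]

noncomputable def greenComparison (b : ℝ) (z : ℂ) : ℝ := diskGreen z / 2 + b * Real.log ‖z‖

theorem greenComparison_harmonicAt (b : ℝ) {z : ℂ} (hz₀ : z ≠ 0) (hz : z ≠ 1 / 2)
    (hz' : z ≠ 2) :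
    HarmonicAt (greenComparison b) z := by
  have h := ((diskGreen_harmonicAt hz hz').const_smul (c := (2⁻¹ : ℝ))).add
    ((analyticAt_id.harmonicAt_log_norm hz₀).const_smul (c := b))
  convert h using 1
  ext w
  simp [greenComparison, div_eq_inv_mul]

theorem greenComparison_eq_zero_of_norm_eq_one (b : ℝ) {z : ℂ} (hz : ‖z‖ = 1) :
    greenComparison b z = 0 := by
  simp [greenComparison, diskGreen_eq_zero_of_norm_eq_one hz, hz]

theorem greenComparison_le_of_norm_le_exp {b : ℝ} (hb : 0 < b) {z : ℂ} (hz₀ : z ≠ 0)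
    (hz : ‖z‖ ≤ 1 / 8) (hzb : ‖z‖ ≤ Real.exp (-3 / b)) : greenComparison b z ≤ -3 / 2 := by
  have hlog : Real.log ‖z‖ ≤ -3 / b := (Real.log_le_iff_le_exp (norm_pos_iff.2 hz₀)).2 hzb
  have hblog : b * Real.log ‖z‖ ≤ -3 :=
    calc b * Real.log ‖z‖ ≤ b * (-3 / b) := mul_le_mul_of_nonneg_left hlog hb.le
      _ = -3 := by field_simp
  rw [greenComparison]
  linarith [diskGreen_le_three hz]

theorem greenComparison_le {b : ℝ} (hb : 0 ≤ b) {z : ℂ} (hz : ‖z‖ ≤ 1) (hz' : z ≠ 1 / 2) :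
    greenComparison b z ≤ (1 - Real.log ‖z - 1 / 2‖) / 2 := by
  have hlog : b * Real.log ‖z‖ ≤ 0 :=
    mul_nonpos_of_nonneg_of_nonpos hb (Real.log_nonpos (norm_nonneg z) hz)
  rw [greenComparison]
  linarith [diskGreen_le hz hz']

theorem IsGreensFunction.tendsto_zero {g : ℂ → ℝ}
    (hg : IsGreensFunction (ball (0 : ℂ) 1 \ {0}) (1 / 2) g) : Tendsto g (𝓝 0) (𝓝 0) := by
  have hg0 : g 0 = 0 := hg.2.1 0 (by simp)
  have hgc : ContinuousAt g 0 :=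
    hg.1.continuousAt (compl_singleton_mem_nhds (by norm_num : (0 : ℂ) ≠ 1 / 2))
  simpa [hg0] using hgc.tendsto

theorem IsGreensFunction.exists_greenComparison_le_near_boundary {g : ℂ → ℝ}
    (hg : IsGreensFunction (ball (0 : ℂ) 1 \ {0}) (1 / 2) g) {b : ℝ} (hb : 0 < b) :
    ∃ ε > 0, ∃ ρ > 0, ∀ z ∈ closedBall (0 : ℂ) 1 \ {0, 1 / 2},
      ‖z‖ = 1 ∨ ‖z‖ ≤ ε ∨ ‖z - 1 / 2‖ ≤ ρ → greenComparison b z ≤ g z := by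
  obtain ⟨δ, hδ, hgδ⟩ : ∃ δ > 0, ∀ z : ℂ, dist z 0 < δ → -1 < g z :=
    Metric.eventually_nhds_iff.1 (hg.tendsto_zero.eventually (eventually_gt_nhds (by norm_num)))
  obtain ⟨-, hzero, -, C, r, hr, hpole⟩ := hg
  obtain ⟨ε, hε, hεδ, hε8, hεb⟩ : ∃ ε > 0, ε < δ ∧ ε ≤ 1 / 8 ∧ ε ≤ Real.exp (-3 / b) :=
    ⟨min (min (δ / 2) (1 / 8)) (Real.exp (-3 / b)), by positivity,
      by linarith [min_le_left (min (δ / 2) (1 / 8)) (Real.exp (-3 / b)),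
        min_le_left (δ / 2) (1 / 8)],
      (min_le_left _ _).trans (min_le_right _ _), min_le_right _ _⟩
  obtain ⟨ρ, hρ, hρr, hρC⟩ : ∃ ρ > 0, ρ < r ∧ ρ ≤ Real.exp (-(2 * C + 1)) :=
    ⟨min (r / 2) (Real.exp (-(2 * C + 1))), by positivity,
      by linarith [min_le_left (r / 2) (Real.exp (-(2 * C + 1)))], min_le_right _ _⟩
  refine ⟨ε, hε, ρ, hρ, ?_⟩
  rintro z ⟨hz1, hz⟩ (hz' | hz' | hz')
  · rw [hzero z fun h => by simp [hz'] at h, greenComparison_eq_zero_of_norm_eq_one b hz']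
  · have hgz := hgδ z (by rw [dist_zero_right]; linarith)
    linarith [greenComparison_le_of_norm_le_exp hb (fun h => hz (Or.inl h)) (hz'.trans hε8)
      (hz'.trans hεb)]
  · have hzh : z ≠ 1 / 2 := fun h => hz (Or.inr h)
    have hlog : Real.log ‖z - 1 / 2‖ ≤ -(2 * C + 1) :=
      (Real.log_le_iff_le_exp (norm_pos_iff.2 (sub_ne_zero.2 hzh))).2 (hz'.trans hρC)
    have hgz := hpole z ⟨by rw [mem_ball, dist_eq_norm]; linarith, hzh⟩
    linarith [(abs_le.1 hgz).1, greenComparison_le hb.le (mem_closedBall_zero_iff.1 hz1) hzh]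

theorem IsGreensFunction.greenComparison_le {g : ℂ → ℝ}
    (hg : IsGreensFunction (ball (0 : ℂ) 1 \ {0}) (1 / 2) g) {b : ℝ} (hb : 0 < b) {z : ℂ}
    (hz : z ∈ closedBall (0 : ℂ) 1 \ {0, 1 / 2}) : greenComparison b z ≤ g z := by
  obtain ⟨ε, hε, ρ, hρ, hnear⟩ := hg.exists_greenComparison_le_near_boundary hb
  have hne : ∀ w ∈ closedBall (0 : ℂ) 1 \ {0, 1 / 2}, w ≠ 0 ∧ w ≠ 1 / 2 ∧ w ≠ 2 := by
    rintro w ⟨hw1, hw⟩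
    refine ⟨fun h => hw (Or.inl h), fun h => hw (Or.inr h), ?_⟩
    rintro rfl
    norm_num at hw1
  have hharm : HarmonicOnNhd g (ball (0 : ℂ) 1 \ {0, 1 / 2}) := by
    have hopen : IsOpen ((ball (0 : ℂ) 1 \ {0}) \ {1 / 2}) :=
      (isOpen_ball.sdiff isClosed_singleton).sdiff isClosed_singleton
    refine (hg.2.2.1.harmonicOnNhd hopen).mono ?_
    rintro w ⟨hw1, hw⟩
    exact ⟨⟨hw1, fun h => hw (Or.inl h)⟩, fun h => hw (Or.inr h)⟩
  refine sub_nonpos.1 (nonpos_on_disk_diff_pair_of_nonpos_near_boundary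
    (f := fun w => greenComparison b w - g w) hε hρ ?_ ?_
    (fun w hw hw' => sub_nonpos.2 (hnear w hw hw')) hz)
  · intro w hw
    obtain ⟨h0, h1, h2⟩ := hne w ⟨ball_subset_closedBall hw.1, hw.2⟩
    exact (greenComparison_harmonicAt b h0 h1 h2).sub (hharm w hw)
  · intro w hw
    obtain ⟨h0, h1, h2⟩ := hne w hw
    exact ((greenComparison_harmonicAt b h0 h1 h2).1.continuousAt.sub
      (hg.1.continuousAt (isOpen_compl_singleton.mem_nhds h1))).continuousWithinAt

theorem IsGreensFunction.diskGreen_div_two_le {g : ℂ → ℝ}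
    (hg : IsGreensFunction (ball (0 : ℂ) 1 \ {0}) (1 / 2) g) {z : ℂ}
    (hz : z ∈ closedBall (0 : ℂ) 1 \ {0, 1 / 2}) : diskGreen z / 2 ≤ g z := by
  have hcont : Continuous fun b : ℝ => greenComparison b z := by
    unfold greenComparison
    fun_prop
  have ht : Tendsto (fun b => greenComparison b z) (𝓝[>] 0) (𝓝 (diskGreen z / 2)) := by
    simpa [greenComparison] using (hcont.tendsto 0).mono_left nhdsWithin_le_nhds
  exact le_of_tendsto ht (eventually_nhdsWithin_of_forall fun b hb => hg.greenComparison_le hb hz)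

/-- The punctured unit disk `𝔻 \ {0}` has no Green's function with pole at `1/2`
(extended by zero): it is not a regular domain. -/
theorem no_green_function_punctured_disk :
    ¬ ∃ g : ℂ → ℝ, IsGreensFunction (ball (0 : ℂ) 1 \ {0}) (1 / 2) g := by
  rintro ⟨g, hg⟩
  have hGc : ContinuousAt diskGreen 0 :=
    (diskGreen_harmonicAt (by norm_num) (by norm_num)).1.continuousAt
  have hnear : ∀ᶠ z in 𝓝[≠] 0, diskGreen z / 2 ≤ g z := by
    filter_upwards [self_mem_nhdsWithin, nhdsWithin_le_nhds (closedBall_mem_nhds 0 one_pos),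
      nhdsWithin_le_nhds (compl_singleton_mem_nhds (by norm_num : (0 : ℂ) ≠ 1 / 2))]
      with z hz0 hz1 hz2
    exact hg.diskGreen_div_two_le ⟨hz1, by rintro (h | h); exacts [hz0 h, hz2 h]⟩
  have hle : diskGreen 0 / 2 ≤ 0 :=
    le_of_tendsto_of_tendsto ((hGc.div_const 2).tendsto.mono_left nhdsWithin_le_nhds)
      (hg.tendsto_zero.mono_left nhdsWithin_le_nhds) hnear
  rw [diskGreen_zero] at hle
  linarith [Real.log_pos one_lt_two]
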